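/- arXiv:1302.5261 — 2 statements merged into one kernel-verified Lean document; each statement's English description precedes it below -/
import Mathlib

section
/- Three-term recurrence for F_{lm}: for all integers l ≥ 1, −l ≤ m ≤ l, and all x ∈ (−1, 1), [x − m/(l(l+1))] F_{lm}(x) = ζ_{lm} F_{l−1,m}(x) + ζ_{l+1,m} F_{l+1,m}(x), where ζ_{lm} := (1/l)·√((l+1)(l−1)(l+m)(l−m)/((2l+1)(2l−1))) and F_{l'm} := 0 whenever l' < max(1, |m|). -/
open MeasureTheory

/-- The (unnormalized) associated Legendre function
`P_l^m(x) = ((−1)^m / (2^l l!)) (1 − x^2)^{m/2} (d/dx)^{l+m} (x^2 − 1)^l`. -/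
noncomputable def Plm (l m : ℤ) (x : ℝ) : ℝ :=
  ((-1 : ℝ) ^ m / ((2 : ℝ) ^ l * (l.toNat.factorial : ℝ))) *
    (1 - x ^ 2) ^ ((m : ℝ) / 2) *
    iteratedDeriv (l + m).toNat (fun y : ℝ => (y ^ 2 - 1) ^ l) x

/-- The normalization factor `c_{lm} = √((2l+1)/2 · (l−m)!/(l+m)!)`. -/
noncomputable def clm (l m : ℤ) : ℝ :=
  Real.sqrt ((2 * (l : ℝ) + 1) / 2 * ((l - m).toNat.factorial : ℝ) /
    ((l + m).toNat.factorial : ℝ))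

/-- The normalized associated Legendre function `U_{lm} = c_{lm} P_l^m`,
with the convention `U_{lm} = 0` when `|m| > l`. -/
noncomputable def Ulm (l m : ℤ) (x : ℝ) : ℝ :=
  if |m| ≤ l then clm l m * Plm l m x else 0

/-- The function of Sheppard and Török
`F_{lm}(x) = (1/√(l(l+1))) [√(1−x²) U_{lm}'(x) − (m/√(1−x²)) U_{lm}(x)]`. -/
noncomputable def Flm (l m : ℤ) (x : ℝ) : ℝ :=
  (1 / Real.sqrt ((l : ℝ) * ((l : ℝ) + 1))) *
    (Real.sqrt (1 - x ^ 2) * deriv (Ulm l m) x -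
      ((m : ℝ) / Real.sqrt (1 - x ^ 2)) * Ulm l m x)

/-- The factor `ζ_{lm} = (1/l)·√((l+1)(l−1)(l+m)(l−m)/((2l+1)(2l−1)))`. -/
noncomputable def zetalm (l m : ℤ) : ℝ :=
  (1 / (l : ℝ)) *
    Real.sqrt (((l : ℝ) + 1) * ((l : ℝ) - 1) * ((l : ℝ) + m) * ((l : ℝ) - m) /
      ((2 * (l : ℝ) + 1) * (2 * (l : ℝ) - 1)))

/-!
Put `n = l`, `k = l + m` and `q_{n,j} = (d/dx)^j (x² - 1)^n`. Rodrigues' formula gives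
`F_{lm}(x) = N_{lm} (1 - x²)^{(m-1)/2} G_{n,k}(x)` with the polynomial
`G_{n,k} = (1 - x²) q_{n,k+1} - m (1 + x) q_{n,k}` and an explicit constant `N_{lm}`.
Differentiating `d/dx (x² - 1)^{n+1} = 2(n+1) x (x² - 1)^n` and
`x d/dx (x² - 1)^{n+1} = 2(n+1) ((x² - 1)^{n+1} + (x² - 1)^n)` `j` times relates the derivatives
of `(x² - 1)^{n-1}`, `(x² - 1)^n` and `(x² - 1)^{n+1}`, which turns the recurrence into a
polynomial identity between `G_{n-1,k-1}`, `G_{n,k}` and `G_{n+1,k+1}`. The constants contribute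
only rational factors, e.g. `ζ_{l+1,m} N_{l+1,m} = N_{lm} · l (l+1-m) / (2 (l+1)² (2l+1))`, because
the radicands combine into perfect squares. When `l = 1` or `m = ±l`, both `ζ_{lm}` and the
`G_{n-1,k-1}` term vanish.
-/

open Polynomial

section Rodrigues

variable (R : Type*) [CommRing R]

noncomputable def rodrigues (n j : ℕ) : R[X] := derivative^[j] ((X ^ 2 - 1) ^ n)

lemma derivative_X_sq_sub_one_pow_succ (n : ℕ) :
    derivative ((X ^ 2 - 1 : R[X]) ^ (n + 1)) =
      ((2 * (n + 1) : ℕ) : R[X]) * ((X ^ 2 - 1) ^ n * X) := by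
  rw [derivative_pow_succ, derivative_sub, derivative_X_sq, derivative_one]
  simp only [map_add, map_one, map_natCast, map_ofNat]
  push_cast
  ring

lemma rodrigues_succ_succ (n j : ℕ) :
    rodrigues R (n + 1) (j + 1) =
      2 * ((n : R[X]) + 1) * (X * rodrigues R n j + (j : R[X]) * rodrigues R n (j - 1)) := by
  rw [rodrigues, Function.iterate_succ_apply, derivative_X_sq_sub_one_pow_succ,
    iterate_derivative_natCast_mul, iterate_derivative_mul_X, rodrigues, rodrigues, nsmul_eq_mul]
  push_cast
  ring

lemma X_mul_rodrigues_succ_succ (n j : ℕ) :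
    X * rodrigues R (n + 1) (j + 1) + (j : R[X]) * rodrigues R (n + 1) j =
      2 * ((n : R[X]) + 1) * (rodrigues R (n + 1) j + rodrigues R n j) := by
  have h : derivative ((X ^ 2 - 1 : R[X]) ^ (n + 1)) * X =
      ((2 * (n + 1) : ℕ) : R[X]) * ((X ^ 2 - 1) ^ (n + 1) + (X ^ 2 - 1) ^ n) := by
    rw [derivative_X_sq_sub_one_pow_succ]
    ring
  have := congrArg (derivative^[j]) h
  rw [iterate_derivative_derivative_mul_X, iterate_derivative_natCast_mul,
    iterate_map_add] at this
  simp only [rodrigues, nsmul_eq_mul] at this ⊢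
  push_cast at this
  linear_combination this

lemma rodrigues_eq_zero_of_lt {n j : ℕ} (h : 2 * n < j) : rodrigues R n j = 0 := by
  apply iterate_derivative_eq_zero
  calc ((X ^ 2 - 1 : R[X]) ^ n).natDegree ≤ n * (X ^ 2 - 1 : R[X]).natDegree := natDegree_pow_le
    _ ≤ n * 2 := by
      gcongr
      exact (natDegree_sub_le _ _).trans (by simp [natDegree_X_pow_le])
    _ < j := by omega

noncomputable def flmPoly (n k : ℕ) : R[X] :=
  (1 - X ^ 2) * rodrigues R n (k + 1) - ((k : R[X]) - (n : R[X])) * (1 + X) * rodrigues R n k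

/-- `2 n k · flmPoly (n - 1) (k - 1)` (see `flmPolyLower_succ_succ`), written through the
derivatives of `(X² - 1)^n` only, so that it is also defined, and vanishes, at `k = 0`. -/
noncomputable def flmPolyLower (n k : ℕ) : R[X] :=
  (k : R[X]) * (1 - X ^ 2) *
      (X * rodrigues R n (k + 1) - (2 * (n : R[X]) - (k : R[X])) * rodrigues R n k) -
    ((k : R[X]) - (n : R[X])) * (1 + X) * ((1 - X ^ 2) * rodrigues R n (k + 1) +
        (2 * (n : R[X]) - (k : R[X])) * X * rodrigues R n k)

lemma flmPolyLower_succ_succ (n k : ℕ) :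
    flmPolyLower R (n + 1) (k + 1) = 2 * ((n : R[X]) + 1) * ((k : R[X]) + 1) * flmPoly R n k := by
  have h₁ := rodrigues_succ_succ R n (k + 1)
  have h₂ := X_mul_rodrigues_succ_succ R n (k + 1)
  simp only [Nat.add_sub_cancel] at h₁
  simp only [flmPolyLower, flmPoly]
  push_cast at h₁ h₂ ⊢
  linear_combination (((k : R[X]) + 1) * (1 - X ^ 2) + ((k : R[X]) - n) * (1 + X) * X) * h₂ -
    ((k : R[X]) - n) * (1 + X) * h₁

lemma flmPolyLower_zero_right (n : ℕ) : flmPolyLower R n 0 = 0 := by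
  cases n with
  | zero => simp [flmPolyLower]
  | succ n =>
    have h₁ := rodrigues_succ_succ R n 0
    have h₂ := X_mul_rodrigues_succ_succ R n 0
    simp only [flmPolyLower]
    push_cast at h₁ h₂ ⊢
    linear_combination ((n : R[X]) + 1) * (1 + X) * h₁ - ((n : R[X]) + 1) * (1 + X) * X * h₂

lemma flmPolyLower_two_mul (n : ℕ) : flmPolyLower R n (2 * n) = 0 := by
  simp [flmPolyLower, rodrigues_eq_zero_of_lt R (by omega : 2 * n < 2 * n + 1)]

lemma flmPoly_recurrence (n k : ℕ) :
    2 * ((n : R[X]) + 1) * (2 * (n : R[X]) + 1) *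
        ((n : R[X]) * ((n : R[X]) + 1) * X - ((k : R[X]) - (n : R[X]))) * flmPoly R n k =
      2 * ((n : R[X]) + 1) ^ 3 * flmPolyLower R n k +
        (n : R[X]) ^ 2 * (2 * (n : R[X]) + 1 - (k : R[X])) * flmPoly R (n + 1) (k + 1) := by
  have h₁ := rodrigues_succ_succ R n (k + 1)
  have h₂ := X_mul_rodrigues_succ_succ R n (k + 1)
  simp only [Nat.add_sub_cancel] at h₁
  simp only [flmPolyLower, flmPoly]
  push_cast at h₁ h₂ ⊢
  linear_combination ((n : R[X]) ^ 2 * ((k : R[X]) - n) * (1 + X) * X -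
      (n : R[X]) ^ 2 * (2 * n + 1 - k) * (1 - X ^ 2)) * h₁ -
    (n : R[X]) ^ 2 * ((k : R[X]) - n) * (1 + X) * h₂

end Rodrigues

lemma Polynomial.iteratedDeriv_eval {𝕜 : Type*} [NontriviallyNormedField 𝕜] (p : 𝕜[X])
    (j : ℕ) :
    iteratedDeriv j (fun y => p.eval y) = fun y => (derivative^[j] p).eval y := by
  induction j with
  | zero => simp
  | succ j ih =>
    ext y
    rw [iteratedDeriv_succ, ih, Polynomial.deriv, Function.iterate_succ_apply']

noncomputable def ulmCoeff (l m : ℤ) : ℝ := clm l m * (-1) ^ m / (2 ^ l * l.toNat.factorial)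

noncomputable def flmCoeff (l m : ℤ) : ℝ := ulmCoeff l m / √(l * (l + 1))

lemma Ulm_eq_rodrigues {l m : ℤ} {n k : ℕ} (hl : l = n) (hk : l + m = k) (hkn : k ≤ 2 * n) :
    Ulm l m = fun y => ulmCoeff l m * ((1 - y ^ 2) ^ ((m : ℝ) / 2) * (rodrigues ℝ n k).eval y) := by
  have hpow : (fun y : ℝ => (y ^ 2 - 1) ^ l) = fun y => ((X ^ 2 - 1 : ℝ[X]) ^ n).eval y := by
    ext y
    simp [hl]
  ext y
  rw [Ulm, if_pos (abs_le.2 ⟨by omega, by omega⟩), Plm, hpow, Polynomial.iteratedDeriv_eval,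
    show (l + m).toNat = k by omega, rodrigues, ulmCoeff]
  ring

lemma hasDerivAt_Ulm {l m : ℤ} {n k : ℕ} (hl : l = n) (hk : l + m = k) (hkn : k ≤ 2 * n)
    {x : ℝ} (hx : 1 - x ^ 2 ≠ 0) :
    HasDerivAt (Ulm l m) (ulmCoeff l m *
      (-(m * x) * (1 - x ^ 2) ^ ((m : ℝ) / 2 - 1) * (rodrigues ℝ n k).eval x +
        (1 - x ^ 2) ^ ((m : ℝ) / 2) * (rodrigues ℝ n (k + 1)).eval x)) x := by
  rw [Ulm_eq_rodrigues hl hk hkn]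
  have hq := Polynomial.hasDerivAt (rodrigues ℝ n k) x
  rw [rodrigues, ← Function.iterate_succ_apply' derivative] at hq
  have hs := ((hasDerivAt_pow 2 x).const_sub 1).rpow_const (p := (m : ℝ) / 2) (Or.inl hx)
  exact ((hs.mul hq).const_mul _).congr_deriv (by simp only [rodrigues]; ring)

lemma Flm_eq_flmPoly {l m : ℤ} {n k : ℕ} (hl : l = n) (hk : l + m = k) (hkn : k ≤ 2 * n)
    {x : ℝ} (hx : x ∈ Set.Ioo (-1) 1) :
    Flm l m x = flmCoeff l m * (1 - x ^ 2) ^ (((m : ℝ) - 1) / 2) * (flmPoly ℝ n k).eval x := by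
  have hs : 0 < 1 - x ^ 2 := by nlinarith [hx.1, hx.2]
  have hsqrt : √(1 - x ^ 2) ^ 2 = 1 - x ^ 2 := Real.sq_sqrt hs.le
  have hsqrt_pos : 0 < √(1 - x ^ 2) := Real.sqrt_pos.2 hs
  set t := (1 - x ^ 2) ^ (((m : ℝ) - 1) / 2)
  have hhalf : (1 - x ^ 2) ^ ((m : ℝ) / 2) = t * √(1 - x ^ 2) := by
    rw [Real.sqrt_eq_rpow, ← Real.rpow_add hs]
    ring_nf
  have hhalf' : (1 - x ^ 2) ^ ((m : ℝ) / 2 - 1) = t / √(1 - x ^ 2) := by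
    rw [Real.sqrt_eq_rpow, ← Real.rpow_sub hs]
    ring_nf
  have hm : (m : ℝ) = k - n := by exact_mod_cast (by omega : m = k - n)
  have hbracket : √(1 - x ^ 2) * deriv (Ulm l m) x - m / √(1 - x ^ 2) * Ulm l m x =
      ulmCoeff l m * t * (flmPoly ℝ n k).eval x := by
    rw [(hasDerivAt_Ulm hl hk hkn hs.ne').deriv, Ulm_eq_rodrigues hl hk hkn]
    beta_reduce
    rw [hhalf, hhalf', flmPoly]
    simp only [eval_sub, eval_mul, eval_pow, eval_X, eval_one, eval_natCast, eval_add]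
    field_simp
    rw [hm]
    linear_combination ulmCoeff l m * t * (rodrigues ℝ n (k + 1)).eval x * hsqrt
  rw [Flm, hbracket, flmCoeff]
  ring

lemma factorial_toNat_add_one {a : ℤ} (ha : 0 ≤ a) :
    ((a + 1).toNat.factorial : ℝ) = (a + 1) * a.toNat.factorial := by
  rw [show (a + 1).toNat = a.toNat + 1 by omega, Nat.factorial_succ]
  push_cast
  rw [show ((a.toNat : ℕ) : ℝ) = a by exact_mod_cast Int.toNat_of_nonneg ha]

lemma clm_succ {l m : ℤ} (hm : |m| ≤ l) :
    clm (l + 1) m = clm l m * √((2 * l + 3) * (l + 1 - m) / ((2 * l + 1) * (l + 1 + m))) := by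
  obtain ⟨hm₁, hm₂⟩ := abs_le.1 hm
  have hm₁R : -(l : ℝ) ≤ m := by exact_mod_cast hm₁
  have hm₂R : (m : ℝ) ≤ l := by exact_mod_cast hm₂
  have hflm := factorial_toNat_add_one (a := l - m) (by omega)
  have hflp := factorial_toNat_add_one (a := l + m) (by omega)
  rw [show l - m + 1 = l + 1 - m by ring] at hflm
  rw [show l + m + 1 = l + 1 + m by ring] at hflp
  have hlm : (0 : ℝ) < (l - m).toNat.factorial := by positivity
  have hlp : (0 : ℝ) < (l + m).toNat.factorial := by positivity
  unfold clm
  push_cast at hflm hflp ⊢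
  rw [hflm, hflp, ← Real.sqrt_mul (div_nonneg (mul_nonneg (by linarith) hlm.le) hlp.le)]
  congr 1
  have : (l : ℝ) + m + 1 ≠ 0 := by linarith
  have : (l : ℝ) + 1 + m ≠ 0 := by linarith
  have : 2 * (l : ℝ) + 1 ≠ 0 := by linarith
  field_simp
  ring

lemma zetalm_radicand_nonneg {l m : ℤ} (hl : 1 ≤ l) (hm : |m| ≤ l) :
    0 ≤ ((l : ℝ) + 1) * (l - 1) * (l + m) * (l - m) / ((2 * l + 1) * (2 * l - 1)) := by
  obtain ⟨hm₁, hm₂⟩ := abs_le.1 hm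
  have hlR : (1 : ℝ) ≤ l := by exact_mod_cast hl
  have hm₁R : -(l : ℝ) ≤ m := by exact_mod_cast hm₁
  have hm₂R : (m : ℝ) ≤ l := by exact_mod_cast hm₂
  apply div_nonneg (mul_nonneg (mul_nonneg (mul_nonneg ?_ ?_) ?_) ?_) (mul_nonneg ?_ ?_) <;> linarith

lemma zetalm_succ_mul_flmCoeff_succ {l m : ℤ} (hl : 1 ≤ l) (hm : |m| ≤ l) :
    zetalm (l + 1) m * flmCoeff (l + 1) m =
      flmCoeff l m * (l * (l + 1 - m) / (2 * (l + 1) ^ 2 * (2 * l + 1))) := by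
  obtain ⟨hm₁, hm₂⟩ := abs_le.1 hm
  have hlR : (1 : ℝ) ≤ l := by exact_mod_cast hl
  have hm₁R : -(l : ℝ) ≤ m := by exact_mod_cast hm₁
  have hm₂R : (m : ℝ) ≤ l := by exact_mod_cast hm₂
  have hZ := zetalm_radicand_nonneg (l := l + 1) (m := m) (by omega) (abs_le.2 ⟨by omega, by omega⟩)
  unfold zetalm flmCoeff ulmCoeff
  rw [clm_succ hm, factorial_toNat_add_one (by omega), zpow_add_one₀ two_ne_zero]
  push_cast at hZ ⊢
  set Z := ((l : ℝ) + 1 + 1) * ((l : ℝ) + 1 - 1) * ((l : ℝ) + 1 + m) * ((l : ℝ) + 1 - m) /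
        ((2 * ((l : ℝ) + 1) + 1) * (2 * ((l : ℝ) + 1) - 1)) with hZdef
  set ρ := (2 * (l : ℝ) + 3) * (l + 1 - m) / ((2 * l + 1) * (l + 1 + m)) with hρ
  have h2l : 2 * (l : ℝ) + 1 ≠ 0 := by linarith
  have key : √Z * √ρ * √((l : ℝ) * (l + 1)) * (2 * l + 1) =
      √(((l : ℝ) + 1) * (l + 1 + 1)) * (l * (l + 1 - m)) := by
    rw [← eq_div_iff h2l, mul_div_assoc]
    have hr : 0 ≤ (l : ℝ) * (l + 1 - m) / (2 * l + 1) :=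
      div_nonneg (mul_nonneg (by linarith) (by linarith)) (by linarith)
    have hρ0 : 0 ≤ ρ := div_nonneg (mul_nonneg (by linarith) (by linarith))
      (mul_nonneg (by linarith) (by linarith))
    rw [← Real.sqrt_mul hZ, ← Real.sqrt_mul (mul_nonneg hZ hρ0), ← Real.sqrt_sq hr,
      ← Real.sqrt_mul (by positivity)]
    congr 1
    rw [hZdef, hρ, show 2 * ((l : ℝ) + 1) - 1 = 2 * l + 1 by ring]
    have : (l : ℝ) + 1 + m ≠ 0 := by linarith
    field_simp
    ring
  have hL : 0 < √((l : ℝ) * (l + 1)) := Real.sqrt_pos.2 (by positivity)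
  have hL' : 0 < √(((l : ℝ) + 1) * (l + 1 + 1)) := Real.sqrt_pos.2 (by positivity)
  field_simp
  linear_combination clm l m * key

lemma zetalm_sq {l m : ℤ} (hl : 1 ≤ l) (hm : |m| ≤ l) :
    zetalm l m ^ 2 =
      ((l : ℝ) + 1) * (l - 1) * (l + m) * (l - m) / (l ^ 2 * ((2 * l + 1) * (2 * l - 1))) := by
  have hlR : (1 : ℝ) ≤ l := by exact_mod_cast hl
  rw [zetalm, mul_pow, Real.sq_sqrt (zetalm_radicand_nonneg hl hm)]
  field_simp

lemma zetalm_mul_flmCoeff_sub_one {l m : ℤ} (hl : 2 ≤ l) (hm : |m| < l) :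
    zetalm l m * flmCoeff (l - 1) m = flmCoeff l m * (2 * (l + 1) * (l + m) / (2 * l + 1)) := by
  obtain ⟨hm₁, hm₂⟩ := abs_lt.1 hm
  have hlR : (2 : ℝ) ≤ l := by exact_mod_cast hl
  have hm₂R : (m : ℝ) < l := by exact_mod_cast hm₂
  have hstep :=
    zetalm_succ_mul_flmCoeff_succ (l := l - 1) (m := m) (by omega) (abs_le.2 ⟨by omega, by omega⟩)
  rw [sub_add_cancel] at hstep
  push_cast at hstep
  rw [sub_add_cancel, show 2 * ((l : ℝ) - 1) + 1 = 2 * l - 1 by ring] at hstep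
  have hr : ((l : ℝ) - 1) * (l - m) / (2 * l ^ 2 * (2 * l - 1)) ≠ 0 := by
    apply div_ne_zero (mul_ne_zero (by linarith) (by linarith))
    exact mul_ne_zero (mul_ne_zero two_ne_zero (pow_ne_zero 2 (by linarith))) (by linarith)
  apply mul_right_cancel₀ hr
  rw [mul_assoc, ← hstep, ← mul_assoc, ← sq, zetalm_sq (by omega) (abs_le.2 ⟨by omega, by omega⟩)]
  have : (l : ℝ) - 1 ≠ 0 := by linarith
  have : (l : ℝ) - m ≠ 0 := by linarith
  have : 2 * (l : ℝ) - 1 ≠ 0 := by linarith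
  field_simp

lemma zetalm_eq_zero {l m : ℤ} (h : (l - 1) * (l + m) * (l - m) = 0) : zetalm l m = 0 := by
  have hR : ((l : ℝ) - 1) * (l + m) * (l - m) = 0 := by exact_mod_cast h
  rw [zetalm, show ((l : ℝ) + 1) * (l - 1) * (l + m) * (l - m) =
    (l + 1) * (((l : ℝ) - 1) * (l + m) * (l - m)) by ring, hR]
  simp

lemma flmPolyLower_one_one : flmPolyLower ℝ 1 1 = 0 := by
  have h := flmPolyLower_succ_succ ℝ 0 0
  simp only [flmPoly, rodrigues] at h
  simpa using h

lemma zetalm_mul_Flm_sub_one {l m : ℤ} {n k : ℕ} (hl : l = n) (hk : l + m = k)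
    (hkn : k ≤ 2 * n) {x : ℝ} (hx : x ∈ Set.Ioo (-1) 1) :
    zetalm l m * Flm (l - 1) m x = flmCoeff l m * (1 - x ^ 2) ^ (((m : ℝ) - 1) / 2) *
      (((l : ℝ) + 1) / (l * (2 * l + 1)) * (flmPolyLower ℝ n k).eval x) := by
  by_cases hgen : 2 ≤ n ∧ 1 ≤ k ∧ k < 2 * n
  · obtain ⟨n, rfl⟩ : ∃ n', n = n' + 1 := ⟨n - 1, by omega⟩
    obtain ⟨k, rfl⟩ : ∃ k', k = k' + 1 := ⟨k - 1, by omega⟩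
    have hlR : (2 : ℝ) ≤ l := by rw [hl]; exact_mod_cast hgen.1
    have hkR : (l : ℝ) + m = k + 1 := by exact_mod_cast hk
    rw [Flm_eq_flmPoly (n := n) (k := k) (by omega) (by omega) (by omega) hx,
      ← mul_assoc (zetalm l m), ← mul_assoc (zetalm l m),
      zetalm_mul_flmCoeff_sub_one (l := l) (m := m) (by omega) (abs_lt.2 ⟨by omega, by omega⟩),
      flmPolyLower_succ_succ]
    simp only [eval_mul, eval_add, eval_ofNat, eval_natCast, eval_one]
    rw [show (n : ℝ) + 1 = l by rw [hl]; push_cast; ring, ← hkR]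
    field_simp
  · have hdeg : k = 0 ∨ k = 2 * n ∨ (n = 1 ∧ k = 1) := by omega
    rw [zetalm_eq_zero (by simp only [mul_eq_zero]; omega)]
    rcases hdeg with rfl | rfl | ⟨rfl, rfl⟩
    · simp [flmPolyLower_zero_right]
    · simp [flmPolyLower_two_mul]
    · simp [flmPolyLower_one_one]

lemma zetalm_succ_mul_Flm_succ {l m : ℤ} {n k : ℕ} (hl : l = n) (hk : l + m = k) (hn : 1 ≤ n)
    (hkn : k ≤ 2 * n) {x : ℝ} (hx : x ∈ Set.Ioo (-1) 1) :
    zetalm (l + 1) m * Flm (l + 1) m x = flmCoeff l m * (1 - x ^ 2) ^ (((m : ℝ) - 1) / 2) *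
      ((l : ℝ) * (l + 1 - m) / (2 * (l + 1) ^ 2 * (2 * l + 1)) *
        (flmPoly ℝ (n + 1) (k + 1)).eval x) := by
  rw [Flm_eq_flmPoly (n := n + 1) (k := k + 1) (by omega) (by omega) (by omega) hx,
    ← mul_assoc (zetalm _ _), ← mul_assoc (zetalm _ _),
    zetalm_succ_mul_flmCoeff_succ (by omega) (abs_le.2 ⟨by omega, by omega⟩)]
  ring

/-- With these definitions `F_{l'm} = 0` automatically whenever `l' < max(1, |m|)`. -/
theorem Flm_three_term_recurrence (l m : ℤ) (hl : 1 ≤ l) (hm₁ : -l ≤ m) (hm₂ : m ≤ l)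
    (x : ℝ) (hx : x ∈ Set.Ioo (-1 : ℝ) 1) :
    (x - (m : ℝ) / ((l : ℝ) * ((l : ℝ) + 1))) * Flm l m x =
      zetalm l m * Flm (l - 1) m x + zetalm (l + 1) m * Flm (l + 1) m x := by
  obtain ⟨n, rfl⟩ : ∃ n : ℕ, l = n := ⟨l.toNat, by omega⟩
  obtain ⟨k, hk⟩ : ∃ k : ℕ, (n : ℤ) + m = k := ⟨(n + m).toNat, by omega⟩
  have hkn : k ≤ 2 * n := by omega
  rw [Flm_eq_flmPoly rfl hk hkn hx, zetalm_mul_Flm_sub_one rfl hk hkn hx,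
    zetalm_succ_mul_Flm_succ rfl hk (by omega) hkn hx]
  have hI := congrArg (eval x) (flmPoly_recurrence ℝ n k)
  simp only [eval_mul, eval_add, eval_sub, eval_pow, eval_ofNat, eval_natCast, eval_one,
    eval_X] at hI
  have hm : (m : ℝ) = k - n := by exact_mod_cast (by omega : m = k - n)
  have hn : (n : ℝ) ≠ 0 := by exact_mod_cast (by omega : n ≠ 0)
  push_cast
  rw [hm]
  field_simp
  linear_combination flmCoeff n m * (1 - x ^ 2) ^ (((k : ℝ) - n - 1) / 2) * hI
end

section
/- Sturm–Liouville differential equation for F_{lm}: for all integers l ≥ 1, −l ≤ m ≤ l, and all x ∈ (−1, 1), (d/dx)[(1 − x^2) F_{lm}'(x)] − ((m^2 − 2mx + 1)/(1 − x^2)) F_{lm}(x) = −l(l + 1) F_{lm}(x). -/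
/-!
With `w = (x² - 1)^l`, differentiating `(x² - 1) w' = 2 l x w` over and over gives a three-term
recurrence for the derivatives of `w`. At order `l + m` it says that `g = w^{(l+m)}` solves
`(1 - x²) g'' - 2 (m + 1) x g' + (l - m) (l + m + 1) g = 0`, so that `(1 - x²)^{m/2} g`, and hence
`U_{lm}`, solves the associated Legendre equation of degree `l` and order `m`.

For any solution `u` of that equation, the ODE turns the derivative of
`F = √(1 - x²) u' - m u / √(1 - x²)` into the first-order relation
`(1 - x²) F' = (x - m) F - l (l + 1) √(1 - x²) u`. Differentiating it once more and eliminating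
`u'` through the definition of `F` gives the Sturm–Liouville equation.
-/

open MeasureTheory

open Real Set Filter Topology

lemma one_sub_sq_pos_of_mem_Ioo {x : ℝ} (hx : x ∈ Ioo (-1 : ℝ) 1) : 0 < 1 - x ^ 2 := by
  obtain ⟨h₁, h₂⟩ := hx
  nlinarith

lemma hasDerivAt_sq_sub_one (x : ℝ) : HasDerivAt (fun y : ℝ => y ^ 2 - 1) (2 * x) x := by
  simpa using (hasDerivAt_pow 2 x).sub_const 1

lemma hasDerivAt_one_sub_sq (x : ℝ) : HasDerivAt (fun y : ℝ => 1 - y ^ 2) (-(2 * x)) x := by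
  simpa using (hasDerivAt_pow 2 x).const_sub 1

lemma hasDerivAt_one_sub_sq_rpow (a : ℝ) {x : ℝ} (hx : 1 - x ^ 2 ≠ 0) :
    HasDerivAt (fun y : ℝ => (1 - y ^ 2) ^ a)
      (-(2 * a * x) / (1 - x ^ 2) * (1 - x ^ 2) ^ a) x := by
  convert (hasDerivAt_one_sub_sq x).rpow_const (p := a) (Or.inl hx) using 1
  rw [rpow_sub_one hx]
  ring

lemma hasDerivAt_mul_div_one_sub_sq (c : ℝ) {x : ℝ} (hx : 1 - x ^ 2 ≠ 0) :
    HasDerivAt (fun y : ℝ => c * y / (1 - y ^ 2)) (c * (1 + x ^ 2) / (1 - x ^ 2) ^ 2) x := by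
  refine (((hasDerivAt_id x).const_mul c).div (hasDerivAt_one_sub_sq x) hx).congr_deriv ?_
  simp only [id]
  ring

lemma hasDerivAt_sqrt_one_sub_sq {x : ℝ} (hx : 0 < 1 - x ^ 2) :
    HasDerivAt (fun y : ℝ => √(1 - y ^ 2)) (-x / √(1 - x ^ 2)) x := by
  refine ((hasDerivAt_one_sub_sq x).sqrt hx.ne').congr_deriv ?_
  field_simp

lemma sq_sub_one_mul_deriv_step {a b c e : ℝ → ℝ} {α β : ℝ}
    (ha : ∀ x, HasDerivAt a (b x) x) (hb : ∀ x, HasDerivAt b (c x) x)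
    (he : ∀ x, HasDerivAt e (β * a x) x)
    (h : ∀ x, (x ^ 2 - 1) * b x = α * x * a x + e x) (x : ℝ) :
    (x ^ 2 - 1) * c x = (α - 2) * x * b x + (α + β) * a x := by
  have hfun : (fun x => (x ^ 2 - 1) * b x) = fun x => α * x * a x + e x := funext h
  have hl : HasDerivAt (fun x => (x ^ 2 - 1) * b x) (2 * x * b x + (x ^ 2 - 1) * c x) x :=
    (hasDerivAt_sq_sub_one x).mul (hb x)
  have hr : HasDerivAt (fun x => α * x * a x + e x) (α * 1 * a x + α * x * b x + β * a x) x :=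
    (((hasDerivAt_id x).const_mul α).mul (ha x)).add (he x)
  have hderiv := (hfun ▸ hl).unique hr
  linear_combination hderiv

lemma ContDiff.hasDerivAt_iteratedDeriv {𝕜 F : Type*} [NontriviallyNormedField 𝕜]
    [NormedAddCommGroup F] [NormedSpace 𝕜 F] {f : 𝕜 → F} (hf : ContDiff 𝕜 ⊤ f) (k : ℕ) (x : 𝕜) :
    HasDerivAt (iteratedDeriv k f) (iteratedDeriv (k + 1) f x) x := by
  rw [iteratedDeriv_succ]
  exact (hf.differentiable_iteratedDeriv k (WithTop.coe_lt_top _) x).hasDerivAt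

lemma sq_sub_one_mul_deriv_sq_sub_one_pow (L : ℕ) (x : ℝ) :
    (x ^ 2 - 1) * deriv (fun y : ℝ => (y ^ 2 - 1) ^ L) x = 2 * L * x * (x ^ 2 - 1) ^ L := by
  have hD : HasDerivAt (fun y : ℝ => (y ^ 2 - 1) ^ L) (L * (x ^ 2 - 1) ^ (L - 1) * (2 * x)) x :=
    (hasDerivAt_sq_sub_one x).pow L
  rw [hD.deriv]
  rcases L with _ | L
  · simp
  · rw [Nat.add_sub_cancel, pow_succ]
    push_cast
    ring

theorem sq_sub_one_mul_iteratedDeriv_sq_sub_one_pow (L k : ℕ) (x : ℝ) :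
    (x ^ 2 - 1) * iteratedDeriv (k + 2) (fun y : ℝ => (y ^ 2 - 1) ^ L) x =
      (2 * L - 2 * (k + 1)) * x * iteratedDeriv (k + 1) (fun y : ℝ => (y ^ 2 - 1) ^ L) x +
        (k + 1) * (2 * L - k) * iteratedDeriv k (fun y : ℝ => (y ^ 2 - 1) ^ L) x := by
  have hD : ∀ k x, HasDerivAt (iteratedDeriv k fun y : ℝ => (y ^ 2 - 1) ^ L) _ x :=
    ContDiff.hasDerivAt_iteratedDeriv (by fun_prop)
  induction k generalizing x with
  | zero =>
    have hbase (y : ℝ) := sq_sub_one_mul_deriv_sq_sub_one_pow L y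
    rw [← iteratedDeriv_one] at hbase
    convert sq_sub_one_mul_deriv_step (hD 0) (hD 1) (α := 2 * L) (e := 0) (β := 0)
      (fun y => by simp) (fun y => by simpa using hbase y) x using 1
    push_cast
    ring
  | succ k ih =>
    convert sq_sub_one_mul_deriv_step (hD (k + 1)) (hD (k + 2))
      (fun y => (hD k y).const_mul _) ih x using 1
    push_cast
    ring

def IsAssocLegendreSol (ν m : ℝ) (u : ℝ → ℝ) : Prop :=
  ∀ x ∈ Ioo (-1 : ℝ) 1, DifferentiableAt ℝ u x ∧ DifferentiableAt ℝ (deriv u) x ∧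
    (1 - x ^ 2) * deriv (deriv u) x - 2 * x * deriv u x +
      (ν * (ν + 1) - m ^ 2 / (1 - x ^ 2)) * u x = 0

lemma IsAssocLegendreSol.const_mul {ν m : ℝ} {u : ℝ → ℝ} (hu : IsAssocLegendreSol ν m u)
    (c : ℝ) : IsAssocLegendreSol ν m (fun x => c * u x) := by
  intro x hx
  obtain ⟨hu₁, hu₂, hode⟩ := hu x hx
  simp only [deriv_const_mul_field']
  exact ⟨hu₁.const_mul c, hu₂.const_mul c, by linear_combination c * hode⟩

theorem isAssocLegendreSol_one_sub_sq_rpow_mul {ν m : ℝ} {g : ℝ → ℝ}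
    (hg : ∀ x ∈ Ioo (-1 : ℝ) 1,
      DifferentiableAt ℝ g x ∧ DifferentiableAt ℝ (deriv g) x ∧
      (1 - x ^ 2) * deriv (deriv g) x - 2 * (m + 1) * x * deriv g x +
        (ν * (ν + 1) - m * (m + 1)) * g x = 0) :
    IsAssocLegendreSol ν m (fun x => (1 - x ^ 2) ^ (m / 2) * g x) := by
  set S : ℝ → ℝ := fun x => (1 - x ^ 2) ^ (m / 2)
  have hS (x) (hx : x ∈ Ioo (-1 : ℝ) 1) : HasDerivAt S (-(m * x) / (1 - x ^ 2) * S x) x := by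
    convert hasDerivAt_one_sub_sq_rpow (m / 2) (one_sub_sq_pos_of_mem_Ioo hx).ne' using 2
    ring
  have hu (x) (hx : x ∈ Ioo (-1 : ℝ) 1) :
      HasDerivAt (fun x => S x * g x) (S x * (deriv g x - m * x / (1 - x ^ 2) * g x)) x := by
    refine ((hS x hx).mul (hg x hx).1.hasDerivAt).congr_deriv ?_
    ring
  have hu' (x) (hx : x ∈ Ioo (-1 : ℝ) 1) :
      HasDerivAt (fun x => S x * (deriv g x - m * x / (1 - x ^ 2) * g x))
        (-(m * x) / (1 - x ^ 2) * S x * (deriv g x - m * x / (1 - x ^ 2) * g x) +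
          S x * (deriv (deriv g) x - (m * (1 + x ^ 2) / (1 - x ^ 2) ^ 2 * g x +
            m * x / (1 - x ^ 2) * deriv g x))) x :=
    (hS x hx).mul ((hg x hx).2.1.hasDerivAt.sub
      ((hasDerivAt_mul_div_one_sub_sq m (one_sub_sq_pos_of_mem_Ioo hx).ne').mul
        (hg x hx).1.hasDerivAt))
  have hderiv (x) (hx : x ∈ Ioo (-1 : ℝ) 1) : deriv (fun x => S x * g x) =ᶠ[𝓝 x]
      fun x => S x * (deriv g x - m * x / (1 - x ^ 2) * g x) :=
    eventually_of_mem (isOpen_Ioo.mem_nhds hx) fun y hy => (hu y hy).deriv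
  intro x hx
  have hpos := one_sub_sq_pos_of_mem_Ioo hx
  refine ⟨(hu x hx).differentiableAt,
    (hderiv x hx).differentiableAt_iff.2 (hu' x hx).differentiableAt, ?_⟩
  rw [(hderiv x hx).deriv_eq, (hu' x hx).deriv, (hu x hx).deriv]
  field_simp
  linear_combination (1 - x ^ 2) * S x * (hg x hx).2.2

noncomputable def sheppardTorok (m : ℝ) (u : ℝ → ℝ) (x : ℝ) : ℝ :=
  √(1 - x ^ 2) * deriv u x - m / √(1 - x ^ 2) * u x

section
variable {ν m : ℝ} {u : ℝ → ℝ} {x : ℝ}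

theorem IsAssocLegendreSol.hasDerivAt_sheppardTorok (hu : IsAssocLegendreSol ν m u)
    (hx : x ∈ Ioo (-1 : ℝ) 1) :
    HasDerivAt (sheppardTorok m u)
      (((x - m) * sheppardTorok m u x - ν * (ν + 1) * √(1 - x ^ 2) * u x) / (1 - x ^ 2)) x := by
  obtain ⟨hu₁, hu₂, hode⟩ := hu x hx
  have hpos := one_sub_sq_pos_of_mem_Ioo hx
  have hσ := hasDerivAt_sqrt_one_sub_sq hpos
  have hσpos : 0 < √(1 - x ^ 2) := sqrt_pos.2 hpos
  have hσsq : √(1 - x ^ 2) ^ 2 = 1 - x ^ 2 := sq_sqrt hpos.le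
  refine ((hσ.mul hu₂.hasDerivAt).sub
    (((hasDerivAt_const x m).div hσ hσpos.ne').mul hu₁.hasDerivAt)).congr_deriv ?_
  simp only [sheppardTorok, Pi.div_apply]
  set σ := √(1 - x ^ 2)
  rw [← hσsq] at hode ⊢
  field_simp at hode ⊢
  linear_combination hode

theorem IsAssocLegendreSol.sheppardTorok_sturmLiouville (hu : IsAssocLegendreSol ν m u)
    (hx : x ∈ Ioo (-1 : ℝ) 1) :
    deriv (fun y => (1 - y ^ 2) * deriv (sheppardTorok m u) y) x -
        ((m ^ 2 - 2 * m * x + 1) / (1 - x ^ 2)) * sheppardTorok m u x =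
      -(ν * (ν + 1)) * sheppardTorok m u x := by
  have hflux : (fun y => (1 - y ^ 2) * deriv (sheppardTorok m u) y) =ᶠ[𝓝 x]
      fun y => (y - m) * sheppardTorok m u y - ν * (ν + 1) * √(1 - y ^ 2) * u y := by
    filter_upwards [isOpen_Ioo.mem_nhds hx] with y hy
    rw [(hu.hasDerivAt_sheppardTorok hy).deriv]
    field_simp [(one_sub_sq_pos_of_mem_Ioo hy).ne']
  obtain ⟨hu₁, -, -⟩ := hu x hx
  have hpos := one_sub_sq_pos_of_mem_Ioo hx
  have hσpos : 0 < √(1 - x ^ 2) := sqrt_pos.2 hpos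
  have hσsq : √(1 - x ^ 2) ^ 2 = 1 - x ^ 2 := sq_sqrt hpos.le
  have hflux_deriv : HasDerivAt
      (fun y => (y - m) * sheppardTorok m u y - ν * (ν + 1) * √(1 - y ^ 2) * u y) _ x :=
    (((hasDerivAt_id x).sub_const m).mul (hu.hasDerivAt_sheppardTorok hx)).sub
      (((hasDerivAt_sqrt_one_sub_sq hpos).const_mul (ν * (ν + 1))).mul hu₁.hasDerivAt)
  rw [hflux.deriv_eq, hflux_deriv.deriv]
  simp only [sheppardTorok, id]
  set σ := √(1 - x ^ 2)
  rw [← hσsq]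
  field_simp
  linear_combination (σ ^ 2 * deriv u x - m * u x) * hσsq

end

theorem isAssocLegendreSol_Ulm {l m : ℤ} (hm₁ : -l ≤ m) (hm₂ : m ≤ l) :
    IsAssocLegendreSol l m (Ulm l m) := by
  have hL : (l.toNat : ℝ) = l := by exact_mod_cast Int.toNat_of_nonneg (by omega)
  have hk : ((l + m).toNat : ℝ) = l + m := by exact_mod_cast Int.toNat_of_nonneg (by omega)
  have hw : (fun y : ℝ => (y ^ 2 - 1) ^ l) = fun y => (y ^ 2 - 1) ^ l.toNat := by
    funext y
    conv_lhs => rw [← Int.toNat_of_nonneg (by omega : 0 ≤ l)]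
    exact zpow_natCast _ _
  have hU : Ulm l m = fun y => (clm l m * ((-1) ^ m / (2 ^ l * l.toNat.factorial))) *
      ((1 - y ^ 2) ^ ((m : ℝ) / 2) *
        iteratedDeriv (l + m).toNat (fun y : ℝ => (y ^ 2 - 1) ^ l.toNat) y) := by
    funext y
    rw [Ulm, if_pos (abs_le.2 ⟨hm₁, hm₂⟩), Plm, hw]
    ring
  have hD : ∀ k x, HasDerivAt (iteratedDeriv k fun y : ℝ => (y ^ 2 - 1) ^ l.toNat) _ x :=
    ContDiff.hasDerivAt_iteratedDeriv (by fun_prop)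
  rw [hU]
  refine (isAssocLegendreSol_one_sub_sq_rpow_mul fun x _ =>
    ⟨(hD _ x).differentiableAt, ?_, ?_⟩).const_mul _
  · rw [← iteratedDeriv_succ]
    exact (hD _ x).differentiableAt
  · have hrec := sq_sub_one_mul_iteratedDeriv_sq_sub_one_pow l.toNat (l + m).toNat x
    rw [← iteratedDeriv_succ, ← iteratedDeriv_succ]
    rw [hL, hk] at hrec
    linear_combination -hrec

theorem Flm_sturm_liouville_general (l m : ℤ) (hm₁ : -l ≤ m) (hm₂ : m ≤ l)
    (x : ℝ) (hx : x ∈ Set.Ioo (-1 : ℝ) 1) :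
    deriv (fun y => (1 - y ^ 2) * deriv (Flm l m) y) x -
        (((m : ℝ) ^ 2 - 2 * m * x + 1) / (1 - x ^ 2)) * Flm l m x =
      -((l : ℝ) * ((l : ℝ) + 1)) * Flm l m x := by
  have hF : Flm l m = sheppardTorok m (fun y => 1 / √(l * (l + 1)) * Ulm l m y) := by
    funext y
    simp only [Flm, sheppardTorok, deriv_const_mul_field']
    ring
  rw [hF]
  exact ((isAssocLegendreSol_Ulm hm₁ hm₂).const_mul _).sheppardTorok_sturmLiouville hx

/-- The functions `F_{lm}` satisfy the Sturm–Liouville differential equation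
`d/dx[(1 − x²) F'] − ((m² − 2mx + 1)/(1 − x²)) F = −l(l+1) F`. -/
theorem Flm_sturm_liouville (l m : ℤ) (hl : 1 ≤ l) (hm₁ : -l ≤ m) (hm₂ : m ≤ l)
    (x : ℝ) (hx : x ∈ Set.Ioo (-1 : ℝ) 1) :
    deriv (fun y => (1 - y ^ 2) * deriv (Flm l m) y) x -
        (((m : ℝ) ^ 2 - 2 * m * x + 1) / (1 - x ^ 2)) * Flm l m x =
      -((l : ℝ) * ((l : ℝ) + 1)) * Flm l m x :=
  Flm_sturm_liouville_general l m hm₁ hm₂ x hx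
end
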